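/- Suppose x ∈ V_δ ∩ M̃(τ+ε) and x ∉ M(τ+ε). Then d(x, M(τ+ε)) ≤ ρ(x) − ε where ρ(x) = d(x, M(τ)); in particular ρ(x) > ε. -/
import Mathlib


open Set Metric

/-- key step of Lemma 2.6: in a compact geodesic space `M` with boundary set
`bd`, if `x ∈ V_δ ∩ M̃(τ+ε)` and `x ∉ M(τ+ε)`, then
`d(x, M(τ+ε)) ≤ ρ(x) − ε` where `ρ(x) = d(x, M(τ))`; in particular `ρ(x) > ε`. -/
theorem stmt_12 {M : Type*} [MetricSpace M] [CompactSpace M]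
    (bd : Set M) (hbd : IsClosed bd)
    (τ : M → ℝ) (hτc : Continuous τ) (hτ : ∀ y ∈ bd, 0 ≤ τ y)
    (ε : ℝ) (hε : 0 < ε)
    (hgeo : ∀ a b : M, ∀ t ∈ Icc 0 (dist a b), ∃ w : M, dist a w = t ∧ dist w b = dist a b - t)
    (dt : M → M → ℝ) (hdt : ∀ a b : M, dt a b ≤ dist a b)
    (Vδ : Set M) (x : M) (hxV : x ∈ Vδ)
    (hne : {w : M | ∃ y ∈ bd, dist w y ≤ τ y}.Nonempty)
    (hxMt : x ∈ {w : M | ∃ y ∈ bd, dt w y ≤ τ y + ε})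
    (hxnot : x ∉ {w : M | ∃ y ∈ bd, dist w y ≤ τ y + ε}) :
    infDist x {w : M | ∃ y ∈ bd, dist w y ≤ τ y + ε}
        ≤ infDist x {w : M | ∃ y ∈ bd, dist w y ≤ τ y} - ε ∧
    ε < infDist x {w : M | ∃ y ∈ bd, dist w y ≤ τ y} := by
  set A : Set M := {w : M | ∃ y ∈ bd, dist w y ≤ τ y} with hA
  set B : Set M := {w : M | ∃ y ∈ bd, dist w y ≤ τ y + ε} with hB
  -- A is compact as the image under fst of a closed subset of M × M
  have hScl : IsClosed {p : M × M | p.2 ∈ bd ∧ dist p.1 p.2 ≤ τ p.2} := by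
    apply IsClosed.inter (hbd.preimage continuous_snd)
    exact isClosed_le (continuous_dist) (hτc.comp continuous_snd)
  have hAcomp : IsCompact A := by
    have : A = Prod.fst '' {p : M × M | p.2 ∈ bd ∧ dist p.1 p.2 ≤ τ p.2} := by
      ext w
      constructor
      · rintro ⟨y, hy, hd⟩; exact ⟨(w, y), ⟨hy, hd⟩, rfl⟩
      · rintro ⟨⟨a, y⟩, ⟨hy, hd⟩, rfl⟩; exact ⟨y, hy, hd⟩
    rw [this]
    exact (hScl.isCompact).image continuous_fst
  obtain ⟨z, hzA, hzd⟩ := hAcomp.exists_infDist_eq_dist hne x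
  obtain ⟨y, hy, hdy⟩ := hzA
  -- ε < ρ(x)
  have hερ : ε < infDist x A := by
    by_contra h
    push_neg at h
    exact hxnot ⟨y, hy, by
      calc dist x y ≤ dist x z + dist z y := dist_triangle _ _ _
        _ ≤ ε + τ y := by
            have := hzd ▸ h
            linarith
        _ = τ y + ε := by ring⟩
  refine ⟨?_, hερ⟩
  -- pick point at arclength ε on geodesic from z to x
  obtain ⟨w, hw1, hw2⟩ := hgeo z x ε ⟨le_of_lt hε, by
    rw [dist_comm, ← hzd]; exact le_of_lt hερ⟩
  have hwB : w ∈ B := by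
    refine ⟨y, hy, ?_⟩
    calc dist w y ≤ dist w z + dist z y := dist_triangle _ _ _
      _ ≤ ε + τ y := by rw [dist_comm w z, hw1]; linarith
      _ = τ y + ε := by ring
  calc infDist x B ≤ dist x w := infDist_le_dist_of_mem hwB
    _ = infDist x A - ε := by rw [dist_comm, hw2, dist_comm, ← hzd]
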